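/- For λ ∈ ℝ, every nonnegative integer n, and every real x, the degenerate Bell polynomial satisfies Bel_{n,λ}(x) = e^{−x} Σ_{k=0}^{∞} (1/k!) (k|λ)_n x^k, where the series converges absolutely. -/

import Mathlib

open Finset

/-- The degenerate falling factorial `(x|λ)_n = x(x-λ)(x-2λ)⋯(x-(n-1)λ)`. -/
noncomputable def degFall (x lam : ℝ) (n : ℕ) : ℝ := ∏ i ∈ Finset.range n, (x - i * lam)

/-- The formal power series `(1+λt)^{y/λ} = Σ_{m=0}^∞ (y|λ)_m t^m/m!`. -/
noncomputable def degExp (lam y : ℝ) : PowerSeries ℝ :=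
  PowerSeries.mk fun m => degFall y lam m / m.factorial

/-- The degenerate Stirling numbers of the second kind `S_{2,λ}(n,k)`, defined by
`(1/k!)((1+λt)^{1/λ} - 1)^k = Σ_{n=k}^∞ S_{2,λ}(n,k) t^n/n!`. -/
noncomputable def degStirling2 (lam : ℝ) (n k : ℕ) : ℝ :=
  (n.factorial : ℝ) *
    PowerSeries.coeff n (((k.factorial : ℝ))⁻¹ • (degExp lam 1 - 1) ^ k)

/-- The extended degenerate Stirling numbers of the second kind `S_{2,r}(n+r,k+r|λ)`,
defined by `(1/k!)(1+λt)^{r/λ}((1+λt)^{1/λ} - 1)^k = Σ_{n=k}^∞ S_{2,r}(n+r,k+r|λ) t^n/n!`. -/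
noncomputable def extDegStirling2 (lam : ℝ) (r n k : ℕ) : ℝ :=
  (n.factorial : ℝ) *
    PowerSeries.coeff n
      (((k.factorial : ℝ))⁻¹ • (degExp lam r * (degExp lam 1 - 1) ^ k))

/-- The exponential `e^f = Σ_{k=0}^∞ f^k / k!` of a formal power series, computed
coefficientwise (the coefficientwise sums converge when `f` has zero constant term). -/
noncomputable def expComp (f : PowerSeries ℝ) : PowerSeries ℝ :=
  PowerSeries.mk fun n => ∑' k : ℕ, PowerSeries.coeff n (f ^ k) / k.factorial

/-- The degenerate Bell polynomials, defined by
`e^{x((1+λt)^{1/λ} - 1)} = Σ_{n=0}^∞ Bel_{n,λ}(x) t^n/n!`. -/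
noncomputable def degBell (lam x : ℝ) (n : ℕ) : ℝ :=
  (n.factorial : ℝ) * PowerSeries.coeff n (expComp (x • (degExp lam 1 - 1)))

/-- The extended degenerate Bell polynomials, defined by
`(1+λt)^{r/λ} e^{x((1+λt)^{1/λ} - 1)} = Σ_{n=0}^∞ Bel^{(r)}_{n,λ}(x) t^n/n!`. -/
noncomputable def extDegBell (lam : ℝ) (r : ℕ) (x : ℝ) (n : ℕ) : ℝ :=
  (n.factorial : ℝ) *
    PowerSeries.coeff n (degExp lam r * expComp (x • (degExp lam 1 - 1)))

/-- The signed Stirling numbers of the first kind `S_1(n,k)`, defined by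
`(x)_n = x(x-1)⋯(x-n+1) = Σ_{k=0}^n S_1(n,k) x^k`. -/
noncomputable def stirling1 (n k : ℕ) : ℝ :=
  (∏ i ∈ Finset.range n, (Polynomial.X - Polynomial.C (i : ℝ))).coeff k

/-- The Stirling numbers of the second kind, defined by
`(1/k!)(e^t - 1)^k = Σ_{n=k}^∞ S_2(n,k) t^n/n!`. -/
noncomputable def stirling2 (n k : ℕ) : ℝ :=
  (n.factorial : ℝ) *
    PowerSeries.coeff n (((k.factorial : ℝ))⁻¹ • (PowerSeries.exp ℝ - 1) ^ k)

/-- The r-Stirling numbers of the second kind `S_{2,r}(n+r,k+r)`, defined by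
`e^{rt}(1/k!)(e^t - 1)^k = Σ_{n=0}^∞ S_{2,r}(n+r,k+r) t^n/n!`. -/
noncomputable def rStirling2 (r n k : ℕ) : ℝ :=
  (n.factorial : ℝ) *
    PowerSeries.coeff n
      (PowerSeries.rescale (r : ℝ) (PowerSeries.exp ℝ) *
        ((k.factorial : ℝ))⁻¹ • (PowerSeries.exp ℝ - 1) ^ k)

/-- The ordinary falling factorial `(x)_k = x(x-1)⋯(x-k+1)`. -/
noncomputable def fallFact (x : ℝ) (k : ℕ) : ℝ := ∏ i ∈ Finset.range k, (x - i)

/-!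
The degenerate falling factorials are of binomial type, so `(1+λt)^{k/λ} = ((1+λt)^{1/λ})^k`
for `k : ℕ`. Writing `(1+λt)^{1/λ} = 1 + g` with `g = O(t)` and expanding `(1 + g)^k`
binomially gives `(k|λ)_n = n! ∑_{j ≤ n} C(k,j) [tⁿ] g^j`, a finite sum. Since
`∑_k C(k,j) x^k/k! = e^x x^j/j!`, the Dobinski series is `e^x · n! ∑_{j ≤ n} x^j/j! [tⁿ] g^j`,
and the last factor is the coefficient of `tⁿ/n!` in `e^{x g}`, i.e. `Bel_{n,λ}(x)`.
-/

open PowerSeries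

lemma degFall_succ (x lam : ℝ) (n : ℕ) :
    degFall x lam (n + 1) = degFall x lam n * (x - n * lam) :=
  prod_range_succ _ _

lemma degFall_add (lam a b : ℝ) (n : ℕ) :
    degFall (a + b) lam n = ∑ ij ∈ antidiagonal n,
      (n.choose ij.1 : ℝ) * (degFall a lam ij.1 * degFall b lam ij.2) := by
  induction n with
  | zero => simp [degFall]
  | succ n ih =>
    rw [sum_antidiagonal_choose_succ_mul (fun i j => degFall a lam i * degFall b lam j),
      ← sum_add_distrib, degFall_succ, ih, sum_mul]
    refine sum_congr rfl fun ij hij => ?_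
    obtain rfl : ij.1 + ij.2 = n := mem_antidiagonal.mp hij
    rw [← Nat.choose_symm_add, degFall_succ, degFall_succ]
    push_cast
    ring

lemma coeff_degExp (lam y : ℝ) (n : ℕ) :
    coeff n (degExp lam y) = degFall y lam n / n.factorial :=
  coeff_mk _ _

lemma degExp_zero (lam : ℝ) : degExp lam 0 = 1 := by
  ext (_ | n)
  · simp [coeff_degExp, degFall]
  · simp [coeff_degExp, degFall, prod_range_succ']

lemma degExp_add (lam a b : ℝ) : degExp lam (a + b) = degExp lam a * degExp lam b := by
  ext n
  rw [coeff_degExp, coeff_mul, degFall_add, sum_div]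
  refine sum_congr rfl fun ij hij => ?_
  obtain rfl : ij.1 + ij.2 = n := mem_antidiagonal.mp hij
  have hfact := Nat.add_choose_mul_factorial_mul_factorial ij.1 ij.2
  rw [coeff_degExp, coeff_degExp]
  field_simp
  rw [← hfact, Nat.choose_symm_add]
  push_cast
  ring

lemma degExp_natCast (lam : ℝ) (k : ℕ) : degExp lam k = degExp lam 1 ^ k := by
  induction k with
  | zero => simp [degExp_zero]
  | succ k ih => rw [Nat.cast_succ, degExp_add, ih, pow_succ]

lemma constantCoeff_degExp_one_sub_one (lam : ℝ) : constantCoeff (degExp lam 1 - 1) = 0 := by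
  simp [degExp, degFall]

namespace PowerSeries

variable {R : Type*} [CommSemiring R]

lemma coeff_pow_eq_zero_of_lt {f : R⟦X⟧} (hf : constantCoeff f = 0) {n j : ℕ} (h : n < j) :
    coeff n (f ^ j) = 0 :=
  coeff_of_lt_order _ ((Nat.cast_lt.mpr h).trans_le (le_order_pow_of_constantCoeff_eq_zero j hf))

lemma coeff_one_add_pow {f : R⟦X⟧} (hf : constantCoeff f = 0) (n k : ℕ) :
    coeff n ((1 + f) ^ k) = ∑ j ∈ range (n + 1), (k.choose j : R) * coeff n (f ^ j) := by
  have hsum : coeff n ((1 + f) ^ k) = ∑ j ∈ range (k + 1), (k.choose j : R) * coeff n (f ^ j) := by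
    simp only [add_comm (1 : R⟦X⟧), add_pow, one_pow, mul_one, map_sum, ← map_natCast (C (R := R)),
      coeff_mul_C, mul_comm]
  rw [hsum, sum_subset (range_subset_range.mpr (by omega : k + 1 ≤ n + k + 1)),
    ← sum_subset (range_subset_range.mpr (by omega : n + 1 ≤ n + k + 1))]
  · intro j _ hj
    rw [coeff_pow_eq_zero_of_lt hf (by simpa using hj), mul_zero]
  · intro j _ hj
    rw [Nat.choose_eq_zero_of_lt (by simpa using hj), Nat.cast_zero, zero_mul]

end PowerSeries

lemma coeff_expComp {f : ℝ⟦X⟧} (hf : constantCoeff f = 0) (n : ℕ) :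
    coeff n (expComp f) = ∑ j ∈ range (n + 1), coeff n (f ^ j) / j.factorial := by
  rw [expComp, coeff_mk]
  exact tsum_eq_sum fun j hj => by
    rw [coeff_pow_eq_zero_of_lt hf (by simpa using hj), zero_div]

lemma degFall_natCast_div_factorial (lam : ℝ) (n k : ℕ) :
    degFall k lam n / n.factorial =
      ∑ j ∈ range (n + 1), (k.choose j : ℝ) * coeff n ((degExp lam 1 - 1) ^ j) := by
  rw [← coeff_degExp, degExp_natCast, ← coeff_one_add_pow (constantCoeff_degExp_one_sub_one lam),
    add_sub_cancel]

lemma degBell_eq_sum (lam x : ℝ) (n : ℕ) :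
    degBell lam x n = n.factorial *
      ∑ j ∈ range (n + 1), x ^ j / j.factorial * coeff n ((degExp lam 1 - 1) ^ j) := by
  have hf : constantCoeff (x • (degExp lam 1 - 1)) = 0 := by
    rw [constantCoeff_smul, constantCoeff_degExp_one_sub_one, smul_zero]
  rw [degBell, coeff_expComp hf]
  simp only [smul_pow, coeff_smul, smul_eq_mul]
  congr 1
  exact sum_congr rfl fun j _ => by ring

lemma hasSum_choose_mul_pow_div_factorial (x : ℝ) (j : ℕ) :
    HasSum (fun k => (k.choose j : ℝ) * x ^ k / k.factorial)
      (x ^ j / j.factorial * Real.exp x) := by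
  rw [← hasSum_nat_add_iff' j]
  have hlow : ∑ k ∈ range j, (k.choose j : ℝ) * x ^ k / k.factorial = 0 :=
    sum_eq_zero fun k hk => by simp [Nat.choose_eq_zero_of_lt (mem_range.mp hk)]
  have hshift (i : ℕ) : ((i + j).choose j : ℝ) * x ^ (i + j) / (i + j).factorial =
      x ^ j / j.factorial * (x ^ i / i.factorial) := by
    have hfact := Nat.add_choose_mul_factorial_mul_factorial i j
    field_simp
    rw [← hfact]
    push_cast
    ring
  simp only [hlow, sub_zero, hshift]
  exact (Real.exp_eq_exp_ℝ ▸ NormedSpace.expSeries_div_hasSum_exp x).mul_left _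

lemma hasSum_degFall_mul_pow_div_factorial (lam x : ℝ) (n : ℕ) :
    HasSum (fun k : ℕ => degFall k lam n * x ^ k / k.factorial) (Real.exp x * degBell lam x n) := by
  set c : ℕ → ℝ := fun j => n.factorial * coeff n ((degExp lam 1 - 1) ^ j)
  have hterm (k : ℕ) : degFall k lam n * x ^ k / k.factorial =
      ∑ j ∈ range (n + 1), c j * ((k.choose j : ℝ) * x ^ k / k.factorial) := by
    have h := degFall_natCast_div_factorial lam n k
    rw [div_eq_iff (by positivity)] at h
    simp only [h, c, sum_mul, sum_div]
    exact sum_congr rfl fun j _ => by ring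
  simp only [hterm]
  rw [degBell_eq_sum, mul_sum, mul_sum]
  refine hasSum_sum fun j _ => ?_
  simpa only [c, mul_comm, mul_assoc, mul_left_comm] using
    (hasSum_choose_mul_pow_div_factorial x j).mul_left (c j)

theorem degBell_dobinski (lam : ℝ) (n : ℕ) (x : ℝ) :
    (Summable fun k : ℕ => |(1 / (k.factorial : ℝ)) * degFall (k : ℝ) lam n * x ^ k|) ∧
    degBell lam x n =
      Real.exp (-x) * ∑' k : ℕ, (1 / (k.factorial : ℝ)) * degFall (k : ℝ) lam n * x ^ k := by
  have h := hasSum_degFall_mul_pow_div_factorial lam x n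
  have hform (k : ℕ) : 1 / (k.factorial : ℝ) * degFall k lam n * x ^ k =
      degFall k lam n * x ^ k / k.factorial := by
    ring
  simp only [hform]
  refine ⟨summable_abs_iff.mpr h.summable, ?_⟩
  rw [h.tsum_eq, ← mul_assoc, ← Real.exp_add, neg_add_cancel, Real.exp_zero, one_mul]
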